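/- Let N be an integer with N ≥ 6, and define (as integers) n = ⌊(N − 1)/5⌋, k = ⌈log₂ n⌉, K = 5 + 4k, and x = N − (K + 5(n − ⌈K/5⌉)). Then 1 ≤ x ≤ 9. -/

import Mathlib

/-! Rearranged, `x = (N − 5 n) + (5 ⌈K/5⌉ − K)`. Since `n = ⌊(N − 1)/5⌋`, the first summand is
`1 + (N − 1) mod 5 ∈ [1, 5]`; the second is the rounding slack of a ceiling, in `[0, 4]`. -/

theorem Int.sub_mul_floor_sub_one_div_mem_Icc (N : ℤ) {d : ℕ} (hd : 0 < d) :
    N - d * ⌊((N : ℚ) - 1) / d⌋ ∈ Set.Icc 1 (d : ℤ) := by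
  have hfloor : ⌊((N : ℚ) - 1) / d⌋ = (N - 1) / d := by
    rw [← Rat.floor_intCast_div_natCast]
    push_cast
    rfl
  rw [hfloor]
  have hdiv := Int.mul_ediv_add_emod (N - 1) d
  have hlo := Int.emod_nonneg (N - 1) (by omega : (d : ℤ) ≠ 0)
  have hhi := Int.emod_lt_of_pos (N - 1) (by omega : (0 : ℤ) < d)
  constructor <;> linarith

theorem Int.mul_ceil_div_sub_mem_Ico (K : ℤ) {d : ℕ} (hd : 0 < d) :
    d * ⌈(K : ℚ) / d⌉ - K ∈ Set.Ico 0 (d : ℤ) := by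
  rw [Rat.ceil_intCast_div_natCast]
  have hdiv := Int.mul_ediv_add_emod (-K) d
  have hlo := Int.emod_nonneg (-K) (by omega : (d : ℤ) ≠ 0)
  have hhi := Int.emod_lt_of_pos (-K) (by omega : (0 : ℤ) < d)
  constructor <;> linarith

open Real in
theorem prgTAS_square_cap_bound_general (N : ℤ)
    (n K x : ℤ)
    (hn : n = ⌊((N : ℚ) - 1) / 5⌋)
    (hx : x = N - (K + 5 * (n - ⌈(K : ℚ) / 5⌉))) :
    1 ≤ x ∧ x ≤ 9 := by
  obtain ⟨hrows_lo, hrows_hi⟩ := Int.sub_mul_floor_sub_one_div_mem_Icc N (d := 5) (by norm_num)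
  obtain ⟨hslack_lo, hslack_hi⟩ := Int.mul_ceil_div_sub_mem_Ico K (d := 5) (by norm_num)
  push_cast at hrows_lo hrows_hi hslack_lo hslack_hi
  rw [← hn] at hrows_lo hrows_hi
  constructor <;> omega

open Real in
/-- Parameters of the prgTAS square construction: for `N ≥ 6`, with
`n = ⌊(N-1)/5⌋`, `k = ⌈log₂ n⌉`, `K = 5 + 4k` and
`x = N - (K + 5(n - ⌈K/5⌉))`, we have `1 ≤ x ≤ 9`. -/
theorem prgTAS_square_cap_bound (N : ℤ) (hN : 6 ≤ N)
    (n k K x : ℤ)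
    (hn : n = ⌊((N : ℚ) - 1) / 5⌋)
    (hk : k = ⌈logb 2 (n : ℝ)⌉)
    (hK : K = 5 + 4 * k)
    (hx : x = N - (K + 5 * (n - ⌈(K : ℚ) / 5⌉))) :
    1 ≤ x ∧ x ≤ 9 :=
  prgTAS_square_cap_bound_general N n K x hn hx
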